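/- arXiv:1008.2583 — 2 statements merged into one kernel-verified Lean document; each statement's English description precedes it below -/
import Mathlib

section
/- If n is even and k is odd with n > 2k ≥ 2, then α(P(n,k)) = n; in particular α(P(n,k)) ≥ ⌊4n/5⌋. -/
namespace GP

/-- Adjacency generating relation for the generalized Petersen graph `P(n,k)`:
`Sum.inl i` is the outer vertex `u_i`, `Sum.inr i` is the inner vertex `v_i`. -/
def adjFun (n k : ℕ) : (ZMod n ⊕ ZMod n) → (ZMod n ⊕ ZMod n) → Prop
  | Sum.inl i, Sum.inl j => j = i + 1
  | Sum.inl i, Sum.inr j => j = i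
  | Sum.inr i, Sum.inr j => j = i + (k : ZMod n)
  | _, _ => False

/-- The generalized Petersen graph `P(n,k)`. -/
def P (n k : ℕ) : SimpleGraph (ZMod n ⊕ ZMod n) :=
  SimpleGraph.fromRel (adjFun n k)

/-- `s` is an independent set of vertices in `G`. -/
def IsIndep {V : Type*} (G : SimpleGraph V) (s : Finset V) : Prop :=
  ∀ v ∈ s, ∀ w ∈ s, ¬ G.Adj v w

/-- The independence number of a graph. -/
noncomputable def indepNum {V : Type*} (G : SimpleGraph V) : ℕ :=
  sSup {m | ∃ s : Finset V, IsIndep G s ∧ s.card = m}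

/-- `α(P(n,k))`. -/
noncomputable def alpha (n k : ℕ) : ℕ := indepNum (P n k)

/-- The outer vertex `u_i`. -/
def u (n : ℕ) (i : ZMod n) : ZMod n ⊕ ZMod n := Sum.inl i

/-- The inner vertex `v_i`. -/
def v (n : ℕ) (i : ZMod n) : ZMod n ⊕ ZMod n := Sum.inr i

/-- The `2k`-segment `I_t = {u_t, …, u_{t+2k-1}} ∪ {v_t, …, v_{t+2k-1}}`. -/
def segment (n k : ℕ) (t : ZMod n) : Finset (ZMod n ⊕ ZMod n) :=
  ((Finset.range (2*k)).image fun j : ℕ => u n (t + (j : ZMod n))) ∪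
  ((Finset.range (2*k)).image fun j : ℕ => v n (t + (j : ZMod n)))

/-!
The spokes `u_i v_i` form a perfect matching, so an independent set meets each spoke at most
once and `α(P(n,k)) ≤ n`. When `n` is even the parity of an index in `ZMod n` is well defined,
and when `k` is odd every edge of `P(n,k)` changes the sum of the parity of the index and the
layer (outer `0`, inner `1`). So `P(n,k)` is bipartite, and choosing on each spoke the endpoint
of colour `0` gives an independent set of size `n`.
-/

lemma indepNum_eq_of_isIndep {V : Type*} {G : SimpleGraph V} {m : ℕ}
    (hle : ∀ s, IsIndep G s → s.card ≤ m) (s : Finset V) (hs : IsIndep G s) (hcard : s.card = m) :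
    indepNum G = m :=
  have hmem : m ∈ {m | ∃ s : Finset V, IsIndep G s ∧ s.card = m} := ⟨s, hs, hcard⟩
  have hub : m ∈ upperBounds {m | ∃ s : Finset V, IsIndep G s ∧ s.card = m} := by
    rintro _ ⟨t, ht, rfl⟩
    exact hle t ht
  le_antisymm (csSup_le ⟨m, hmem⟩ hub) (le_csSup ⟨m, hub⟩ hmem)

lemma isIndep_of_forall_color_eq {V α : Type*} {G : SimpleGraph V} (C : G.Coloring α)
    {s : Finset V} {c : α} (hs : ∀ x ∈ s, C x = c) : IsIndep G s :=
  fun x hx y hy hxy => C.valid hxy ((hs x hx).trans (hs y hy).symm)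

section

variable {n k : ℕ}

lemma P_adj_spoke (i : ZMod n) : (P n k).Adj (Sum.inl i) (Sum.inr i) := by
  simp [P, adjFun]

def spokeIndex : ZMod n ⊕ ZMod n → ZMod n := Sum.elim id id

lemma card_le_of_isIndep [NeZero n] {s : Finset (ZMod n ⊕ ZMod n)} (hs : IsIndep (P n k) s) :
    s.card ≤ n := by
  calc s.card ≤ (Finset.univ : Finset (ZMod n)).card := by
        refine Finset.card_le_card_of_injOn spokeIndex (fun _ _ => Finset.mem_univ _) ?_
        rintro (i | i) hx (j | j) hy (hij : i = j) <;> subst hij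
        · rfl
        · exact (hs _ hx _ hy (P_adj_spoke i)).elim
        · exact (hs _ hx _ hy (P_adj_spoke i).symm).elim
        · rfl
    _ = n := by rw [Finset.card_univ, ZMod.card]

variable (hn : 2 ∣ n)

def parity : ZMod n →+* ZMod 2 := ZMod.castHom hn (ZMod 2)

def color : ZMod n ⊕ ZMod n → ZMod 2
  | Sum.inl i => parity hn i
  | Sum.inr i => parity hn i + 1

lemma color_eq_add_one_of_adjFun (hk : Odd k) {x y : ZMod n ⊕ ZMod n} (hxy : adjFun n k x y) :
    color hn y = color hn x + 1 := by
  have hk2 : parity hn (k : ZMod n) = 1 := by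
    rw [map_natCast]
    exact ZMod.natCast_eq_one_iff_odd.mpr hk
  rcases x with i | i <;> rcases y with j | j <;> simp only [adjFun] at hxy <;> subst hxy <;>
    simp [color, hk2]

def twoColoring (hk : Odd k) : (P n k).Coloring (ZMod 2) :=
  SimpleGraph.Coloring.mk (color hn) fun {x y} hxy => by
    rcases ((SimpleGraph.fromRel_adj _ x y).mp hxy).2 with h | h
    · rw [color_eq_add_one_of_adjFun hn hk h]
      exact (succ_ne_self _).symm
    · rw [color_eq_add_one_of_adjFun hn hk h]
      exact succ_ne_self _

def evenEndpoint (i : ZMod n) : ZMod n ⊕ ZMod n :=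
  if parity hn i = 0 then Sum.inl i else Sum.inr i

lemma color_evenEndpoint (i : ZMod n) : color hn (evenEndpoint hn i) = 0 := by
  unfold evenEndpoint
  split_ifs with h
  · exact h
  · show parity hn i + 1 = 0
    revert h
    generalize parity hn i = a
    decide +revert

lemma evenEndpoint_injective : Function.Injective (evenEndpoint hn) :=
  Function.LeftInverse.injective (g := spokeIndex) fun i => by
    unfold evenEndpoint
    split_ifs <;> rfl

end

theorem alpha_even_n_odd_k_general (n k : ℕ) (hne : Even n) (hko : Odd k)
    (hn : 2 * k < n) :
    alpha n k = n ∧ 4 * n / 5 ≤ alpha n k := by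
  have : NeZero n := ⟨by omega⟩
  have hd : 2 ∣ n := hne.two_dvd
  have halpha : alpha n k = n := by
    refine indepNum_eq_of_isIndep (fun s hs => card_le_of_isIndep hs)
      (Finset.univ.image (evenEndpoint hd)) ?_ ?_
    · exact isIndep_of_forall_color_eq (twoColoring hd hko)
        (Finset.forall_mem_image.mpr fun i _ => color_evenEndpoint hd i)
    · rw [Finset.card_image_of_injective _ (evenEndpoint_injective hd), Finset.card_univ, ZMod.card]
  exact ⟨halpha, by omega⟩

/-- If `n` is even and `k` is odd with `n > 2k ≥ 2`, then
`α(P(n,k)) = n`; in particular `α(P(n,k)) ≥ ⌊4n/5⌋`. -/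
theorem alpha_even_n_odd_k (n k : ℕ) (hne : Even n) (hko : Odd k) (hk : 1 ≤ k)
    (hn : 2 * k < n) :
    alpha n k = n ∧ 4 * n / 5 ≤ alpha n k :=
  alpha_even_n_odd_k_general n k hne hko hn

end GP
end

section
/- For all integers n, k with k ≥ 1 and n > 3k, α(P(n,k)) ≥ ⌊4n/5⌋; equivalently, the minimum vertex cover of P(n,k) satisfies β(P(n,k)) ≤ n + ⌈n/5⌉ (Behsaz–Hatami–Mahmoodian's conjecture holds whenever n > 3k). -/
/-!
An independent set of `P(n,k)` is described by the indices `i` with `u_i` chosen and those with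
`v_i` chosen. For `k` odd, `u` on even and `v` on odd indices is independent when `n` is even and,
truncated near the wrap-around, loses about `k / 2` indices when `n` is odd. For `k = 2` and
`k = 4` a pattern of period 5 leaves one index in five unused; for `k = 4` it closes up around the
cycle only after up to three phase shifts, each of which saves an index. For even `k ≥ 6`, blocks
of length `k + 1` alternating `v` and `u` and ending in an unused index leave roughly
`n / (k + 1) + k / 2` indices unused. The finitely many pairs `(n, k)` for which these counts fall
short of `⌊4n/5⌋` are covered by explicit sets.
-/

namespace GP

open Finset

theorem add_mod_eq_or_add_mod_add_eq (a : ℕ) {c M : ℕ} (hc : c ≤ M) :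
    (a + c) % M = a % M + c ∨ (a + c) % M + M = a % M + c := by
  rcases M.eq_zero_or_pos with rfl | hM
  · simp_all
  rw [← Nat.mod_add_mod]
  rcases lt_or_ge (a % M + c) M with h | h
  · exact .inl (Nat.mod_eq_of_lt h)
  · have := Nat.mod_lt a hM
    rw [Nat.mod_eq_sub_mod h, Nat.mod_eq_of_lt (by omega)]
    omega

theorem count_add_count_eq_of_succ {p q : ℕ → Prop} [DecidablePred p] [DecidablePred q]
    (f : ℕ → ℕ) (h0 : f 0 = 0)
    (hf : ∀ N, f (N + 1) = f N + (if p N then 1 else 0) + (if q N then 1 else 0)) (N : ℕ) :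
    Nat.count p N + Nat.count q N = f N := by
  induction N with
  | zero => simp [h0]
  | succ N ih => rw [Nat.count_succ, Nat.count_succ, hf, ← ih]; ring

theorem count_mul_add_of_periodic {p : ℕ → Prop} [DecidablePred p] {M : ℕ}
    (hp : Function.Periodic p M) (q r : ℕ) :
    Nat.count p (M * q + r) = q * Nat.count p M + Nat.count p r := by
  induction q with
  | zero => simp
  | succ q ih =>
    have hshift : (fun j => p (M + j)) = p := funext fun j => by rw [add_comm, hp]
    rw [show M * (q + 1) + r = M + (M * q + r) by ring, Nat.count_add]
    simp only [hshift, ih]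
    ring

theorem count_and_lt (p : ℕ → Prop) [DecidablePred p] {L N : ℕ} (h : L ≤ N) :
    Nat.count (fun i => p i ∧ i < L) N = Nat.count p L := by
  suffices ∀ N, Nat.count (fun i => p i ∧ i < L) N = Nat.count p (min N L) by
    rw [this, min_eq_right h]
  intro N
  induction N with
  | zero => simp
  | succ N ih =>
    rcases lt_or_ge N L with hN | hN
    · simp [Nat.count_succ, ih, hN, min_eq_left hN.le]
    · simp [Nat.count_succ, ih, min_eq_right hN, min_eq_right (hN.trans N.le_succ), hN.not_gt]

theorem count_mod_odd {M N : ℕ} (h : N ≤ M) : Nat.count (fun i => i % M % 2 = 1) N = N / 2 := by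
  induction N with
  | zero => rfl
  | succ N ih =>
    rw [Nat.count_succ, ih (by omega), Nat.mod_eq_of_lt (by omega : N < M)]
    split_ifs <;> omega

theorem count_mod_even_lt {k M N : ℕ} (h : N ≤ M) :
    Nat.count (fun i => i % M % 2 = 0 ∧ i % M < k) N = (min N k + 1) / 2 := by
  induction N with
  | zero => simp
  | succ N ih =>
    rw [Nat.count_succ, ih (by omega), Nat.mod_eq_of_lt (by omega : N < M)]
    split_ifs <;> omega

section Constructions

variable {n k : ℕ}

theorem card_le_alpha [NeZero n] {s : Finset (ZMod n ⊕ ZMod n)} (hs : IsIndep (P n k) s) :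
    #s ≤ alpha n k :=
  le_csSup ⟨Fintype.card _, by rintro _ ⟨t, -, rfl⟩; exact card_le_univ t⟩ ⟨s, hs, rfl⟩

/-- `pU i` (resp. `pV i`) says that `u_i` (resp. `v_i`) is chosen, for `i < n`. -/
def IsIndepPattern (n k : ℕ) (pU pV : ℕ → Prop) : Prop :=
  ∀ i < n, (pU i → ¬ pV i) ∧ (pU i → ¬ pU ((i + 1) % n)) ∧ (pV i → ¬ pV ((i + k) % n))

instance {pU pV : ℕ → Prop} [DecidablePred pU] [DecidablePred pV] :
    Decidable (IsIndepPattern n k pU pV) :=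
  inferInstanceAs (Decidable (∀ i < n, _))

theorem eq_add_mod_of_natCast_add_eq {i j : ℕ} (c : ℕ) (hj : j < n)
    (h : (i : ZMod n) + c = j) : j = (i + c) % n := by
  rw [← Nat.mod_eq_of_lt hj, ← ZMod.natCast_eq_natCast_iff', Nat.cast_add, h]

theorem count_add_count_le_alpha [NeZero n] {pU pV : ℕ → Prop} [DecidablePred pU]
    [DecidablePred pV] (h : IsIndepPattern n k pU pV) :
    Nat.count pU n + Nat.count pV n ≤ alpha n k := by
  have hinj : Set.InjOn (Nat.cast : ℕ → ZMod n) (range n) := fun i hi j hj hij => by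
    simpa [Nat.mod_eq_of_lt (mem_range.mp hi), Nat.mod_eq_of_lt (mem_range.mp hj)] using
      (ZMod.natCast_eq_natCast_iff' i j n).mp hij
  let A : Finset (ZMod n) := {i ∈ range n | pU i}.image Nat.cast
  let B : Finset (ZMod n) := {i ∈ range n | pV i}.image Nat.cast
  have hcard : #(A.disjSum B) = Nat.count pU n + Nat.count pV n := by
    rw [card_disjSum, card_image_of_injOn (hinj.mono (filter_subset _ _)),
      card_image_of_injOn (hinj.mono (filter_subset _ _)), Nat.count_eq_card_filter_range,
      Nat.count_eq_card_filter_range]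
  refine hcard ▸ card_le_alpha ?_
  rintro (_ | _) hx (_ | _) hy hadj <;>
    simp only [inl_mem_disjSum, inr_mem_disjSum, A, B, mem_image, mem_filter, mem_range]
      at hx hy <;>
    obtain ⟨i, ⟨hi, hpi⟩, rfl⟩ := hx <;> obtain ⟨j, ⟨hj, hpj⟩, rfl⟩ := hy <;>
    simp only [P, SimpleGraph.fromRel_adj, adjFun] at hadj
  · rcases hadj.2 with hij | hij
    · exact (h i hi).2.1 hpi (eq_add_mod_of_natCast_add_eq 1 hj (by simpa using hij.symm) ▸ hpj)
    · exact (h j hj).2.1 hpj (eq_add_mod_of_natCast_add_eq 1 hi (by simpa using hij.symm) ▸ hpi)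
  · obtain rfl := hinj (mem_range.mpr hj) (mem_range.mpr hi) (hadj.2.resolve_right id)
    exact (h j hj).1 hpi hpj
  · obtain rfl := hinj (mem_range.mpr hi) (mem_range.mpr hj) (hadj.2.resolve_left id)
    exact (h i hi).1 hpj hpi
  · rcases hadj.2 with hij | hij
    · exact (h i hi).2.2 hpi (eq_add_mod_of_natCast_add_eq k hj hij.symm ▸ hpj)
    · exact (h j hj).2.2 hpj (eq_add_mod_of_natCast_add_eq k hi hij.symm ▸ hpi)

theorem le_alpha_of_odd_of_even [NeZero n] (hk : Odd k) (hn : Even n) : n ≤ alpha n k := by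
  have hk2 := Nat.odd_iff.mp hk
  have hpat : IsIndepPattern n k (· % 2 = 0) (· % 2 = 1) := fun i _ => by
    beta_reduce
    rw [Nat.mod_mod_of_dvd _ hn.two_dvd, Nat.mod_mod_of_dvd _ hn.two_dvd]
    omega
  calc n = Nat.count (· % 2 = 0) n + Nat.count (· % 2 = 1) n :=
        (count_add_count_eq_of_succ (fun N => N) rfl (fun N => by split_ifs <;> omega) n).symm
    _ ≤ alpha n k := count_add_count_le_alpha hpat

theorem le_alpha_of_odd_of_odd (hk : Odd k) (hn : Odd n) :
    (n - 1) / 2 + (n - k) / 2 ≤ alpha n k := by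
  have : NeZero n := ⟨by rintro rfl; simp at hn⟩
  have hk2 := Nat.odd_iff.mp hk
  have hn2 := Nat.odd_iff.mp hn
  have hpat : IsIndepPattern n k (fun i => i % 2 = 0 ∧ i + 2 < n)
      (fun i => i % 2 = 1 ∧ i + k < n) := fun i _ => by
    beta_reduce
    refine ⟨by omega, fun hu => ?_, fun hv => ?_⟩
    · rw [Nat.mod_eq_of_lt (by omega : i + 1 < n)]; omega
    · rw [Nat.mod_eq_of_lt hv.2]; omega
  calc (n - 1) / 2 + (n - k) / 2
      = Nat.count (fun i => i % 2 = 0 ∧ i + 2 < n) n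
          + Nat.count (fun i => i % 2 = 1 ∧ i + k < n) n := by
        rw [count_add_count_eq_of_succ (fun N => (min N (n - 2) + 1) / 2 + min N (n - k) / 2)
          (by omega) (fun N => by split_ifs <;> omega) n]
        omega
    _ ≤ alpha n k := count_add_count_le_alpha hpat

theorem le_alpha_two (hn : 2 ≤ n) : n - (n + 4) / 5 ≤ alpha n 2 := by
  have : NeZero n := ⟨by omega⟩
  have hpat : IsIndepPattern n 2 (fun i => i % 5 = 1 ∨ i % 5 = 4)
      (fun i => i % 5 = 2 ∨ i % 5 = 3) := fun i hi => by
    beta_reduce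
    rcases add_mod_eq_or_add_mod_add_eq i (c := 1) (M := n) (by omega) with h1 | h1 <;>
    rcases add_mod_eq_or_add_mod_add_eq i (c := 2) (M := n) hn with h2 | h2 <;>
    rw [Nat.mod_eq_of_lt hi] at h1 h2 <;> omega
  have hcount := count_add_count_eq_of_succ (p := fun i => i % 5 = 1 ∨ i % 5 = 4)
    (q := fun i => i % 5 = 2 ∨ i % 5 = 3) (fun N => N - (N + 4) / 5) rfl
    (fun N => by split_ifs <;> omega) n
  exact hcount ▸ count_add_count_le_alpha hpat

/-- The residue mod 5 that decides whether `u_i` or `v_i` is chosen in `P(n,4)`: the period-5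
pattern is shifted by 2 at index 4 and again every 8 indices, `m` times in all. -/
def phase (m i : ℕ) : ℕ := (i + 2 * min m ((i + 4) / 8)) % 5

theorem le_alpha_four (m : ℕ) (h5 : (n + 2 * m) % 5 = 0 ∨ (n + 2 * m) % 5 = 3) (h4 : 4 ≤ n)
    (h8 : 8 * m ≤ n + 1) : n - (m + (n + 4 - 8 * m) / 5) ≤ alpha n 4 := by
  have : NeZero n := ⟨by omega⟩
  have hpat : IsIndepPattern n 4 (fun i => phase m i = 2 ∨ phase m i = 4)
      (fun i => phase m i = 1 ∨ phase m i = 3) := fun i hi => by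
    beta_reduce
    unfold phase
    rcases add_mod_eq_or_add_mod_add_eq i (c := 1) (M := n) (by omega) with h1 | h1 <;>
    rcases add_mod_eq_or_add_mod_add_eq i (c := 4) (M := n) h4 with h2 | h2 <;>
    rw [Nat.mod_eq_of_lt hi] at h1 h2 <;> omega
  have hcount := count_add_count_eq_of_succ (p := fun i => phase m i = 2 ∨ phase m i = 4)
    (q := fun i => phase m i = 1 ∨ phase m i = 3)
    (fun N => N - (min m ((N + 4) / 8) + (N + 4 - 8 * min m ((N + 4) / 8)) / 5)) (by omega)
    (fun N => by unfold phase; split_ifs <;> omega) n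
  rw [show min m ((n + 4) / 8) = m by omega] at hcount
  exact hcount ▸ count_add_count_le_alpha hpat

/-- The independent set of `P(n,k)`, `k` even, that in every block of `k + 1` consecutive indices
takes `v` at the even offsets below `k` and `u` at the odd ones, omitting `v_i` for `i ≥ n - k`,
has this many elements. -/
def evenPatternSize (n k : ℕ) : ℕ :=
  n / (k + 1) * (k / 2) + n % (k + 1) / 2
    + (n - k) / (k + 1) * (k / 2) + ((n - k) % (k + 1) + 1) / 2

theorem evenPatternSize_le_alpha (hk : Even k) (hkn : k < n) : evenPatternSize n k ≤ alpha n k := by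
  have : NeZero n := ⟨by omega⟩
  have hk2 := Nat.even_iff.mp hk
  have hM : 0 < k + 1 := k.succ_pos
  let pU : ℕ → Prop := fun i => i % (k + 1) % 2 = 1
  let pV : ℕ → Prop := fun i => i % (k + 1) % 2 = 0 ∧ i % (k + 1) < k
  have hpat : IsIndepPattern n k pU (fun i => pV i ∧ i < n - k) := fun i hi => by
    have hiM := Nat.mod_lt i hM
    refine ⟨fun hu hv => by simp only [pU, pV] at hu hv; omega, fun hu => ?_, fun hv => ?_⟩
    · rcases add_mod_eq_or_add_mod_add_eq i (c := 1) (M := n) (by omega) with h | h <;>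
        rw [Nat.mod_eq_of_lt hi] at h
      · rw [show (i + 1) % n = i + 1 by omega]
        rcases add_mod_eq_or_add_mod_add_eq i (c := 1) (M := k + 1) (by omega) with h' | h' <;>
          simp only [pU] at hu ⊢ <;> omega
      · rw [show (i + 1) % n = 0 by omega]
        simp [pU]
    · rw [Nat.mod_eq_of_lt (by omega : i + k < n)]
      rcases add_mod_eq_or_add_mod_add_eq i (c := k) (M := k + 1) (by omega) with h' | h' <;>
        simp only [pV] at hv ⊢ <;> omega
  have hperU : Function.Periodic pU (k + 1) := fun i => by simp only [pU, Nat.add_mod_right]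
  have hperV : Function.Periodic pV (k + 1) := fun i => by simp only [pV, Nat.add_mod_right]
  have hU : Nat.count pU n = n / (k + 1) * (k / 2) + n % (k + 1) / 2 := by
    conv_lhs => rw [← Nat.div_add_mod n (k + 1)]
    rw [count_mul_add_of_periodic hperU, count_mod_odd le_rfl, count_mod_odd (Nat.mod_lt _ hM).le,
      show (k + 1) / 2 = k / 2 by omega]
  have hV : Nat.count (fun i => pV i ∧ i < n - k) n
      = (n - k) / (k + 1) * (k / 2) + ((n - k) % (k + 1) + 1) / 2 := by
    rw [count_and_lt pV (Nat.sub_le n k)]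
    conv_lhs => rw [← Nat.div_add_mod (n - k) (k + 1)]
    rw [count_mul_add_of_periodic hperV, count_mod_even_lt le_rfl,
      count_mod_even_lt (Nat.mod_lt _ hM).le, show (min (k + 1) k + 1) / 2 = k / 2 by omega,
      min_eq_left (Nat.lt_succ_iff.mp (Nat.mod_lt _ hM))]
  have hsize := count_add_count_le_alpha hpat
  rw [hU, hV] at hsize
  unfold evenPatternSize
  omega

theorem four_mul_div_five_le_evenPatternSize_of_fourteen_le (hk : Even k) (h14 : 14 ≤ k)
    (hn : 3 * k < n) :
    4 * n / 5 ≤ evenPatternSize n k := by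
  obtain ⟨H, rfl⟩ := hk
  have hM : 0 < H + H + 1 := by omega
  obtain ⟨q, r, hr, hqr⟩ : ∃ q r, r < H + H + 1 ∧ n - (H + H) = (H + H + 1) * q + r :=
    ⟨_, _, Nat.mod_lt _ hM, (Nat.div_add_mod _ _).symm⟩
  have hlin : (H + H + 1) * q = 2 * (q * H) + q := by ring
  -- `(H - 2) * (q - 2) ≥ 0` is the only nonlinear input.
  have hprod : q = 1 ∨ 2 * H + 2 * q ≤ q * H + 4 := by
    rcases Nat.lt_or_ge q 2 with hq | hq
    · left
      interval_cases q <;> omega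
    · right
      nlinarith
  unfold evenPatternSize
  rw [hqr, Nat.mul_add_div hM, Nat.div_eq_of_lt hr, Nat.mul_add_mod, Nat.mod_eq_of_lt hr,
    show (H + H) / 2 = H by omega, add_zero]
  rcases Nat.eq_zero_or_pos r with rfl | hr0
  · obtain ⟨h1, h2⟩ := (Nat.div_mod_unique hM).mpr
      ⟨(by omega : H + H + (H + H + 1) * q = n), by omega⟩
    rw [h1, h2]
    omega
  · obtain ⟨h1, h2⟩ := (Nat.div_mod_unique hM).mpr
      ⟨(by rw [mul_add_one]; omega : r - 1 + (H + H + 1) * (q + 1) = n), by omega⟩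
    rw [h1, h2, add_one_mul]
    omega

theorem four_mul_div_five_le_evenPatternSize (hk : Even k) (h6 : 6 ≤ k) (hn : 3 * k < n)
    (hexc : ¬ (k = 6 ∧ (n = 19 ∨ n = 20 ∨ n = 22 ∨ n = 24 ∨ n = 29) ∨
      k = 8 ∧ (n = 25 ∨ n = 28 ∨ n = 30) ∨ k = 10 ∧ n = 34 ∨ k = 12 ∧ n = 40)) :
    4 * n / 5 ≤ evenPatternSize n k := by
  obtain h14 | hsmall : 14 ≤ k ∨ k = 6 ∨ k = 8 ∨ k = 10 ∨ k = 12 := by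
    rcases hk with ⟨j, rfl⟩; omega
  · exact four_mul_div_five_le_evenPatternSize_of_fourteen_le hk h14 hn
  obtain ⟨a, r, hr, rfl⟩ : ∃ a r, r < k + 1 ∧ n = (k + 1) * a + r :=
    ⟨_, _, Nat.mod_lt n k.succ_pos, (Nat.div_add_mod n (k + 1)).symm⟩
  rcases hsmall with rfl | rfl | rfl | rfl <;>
    simp only [evenPatternSize, Nat.reduceAdd, Nat.reduceDiv] at hr ⊢ <;>
    interval_cases r <;> omega

theorem bhm_of_finsets [NeZero n] (U V : Finset ℕ)
    (h : IsIndepPattern n k (· ∈ U) (· ∈ V) ∧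
      4 * n / 5 ≤ Nat.count (· ∈ U) n + Nat.count (· ∈ V) n) :
    4 * n / 5 ≤ alpha n k :=
  h.2.trans (count_add_count_le_alpha h.1)

theorem bhm_of_odd (hk : Odd k) (hn : 3 * k < n) : 4 * n / 5 ≤ alpha n k := by
  have hk2 := Nat.odd_iff.mp hk
  rcases Nat.even_or_odd n with hne | hno
  · have : NeZero n := ⟨by omega⟩
    exact (by omega : 4 * n / 5 ≤ n).trans (le_alpha_of_odd_of_even hk hne)
  · have hn2 := Nat.odd_iff.mp hno
    exact (by omega : 4 * n / 5 ≤ (n - 1) / 2 + (n - k) / 2).trans (le_alpha_of_odd_of_odd hk hno)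

theorem bhm_four (hn : 12 < n) : 4 * n / 5 ≤ alpha n 4 := by
  have : NeZero n := ⟨by omega⟩
  obtain rfl | rfl | rfl | hn' : n = 14 ∨ n = 17 ∨ n = 22 ∨ n ≠ 14 ∧ n ≠ 17 ∧ n ≠ 22 := by omega
  · exact bhm_of_finsets {0, 2, 5, 7, 9, 11} {1, 4, 6, 12, 13} (by decide)
  · exact bhm_of_finsets {0, 2, 5, 8, 10, 13} {1, 4, 6, 7, 9, 12, 15} (by decide)
  · exact bhm_of_finsets {2, 5, 8, 10, 13, 18, 21} {1, 4, 6, 7, 9, 12, 14, 15, 17, 20} (by decide)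
  obtain ⟨m, h5, h8, hsize⟩ : ∃ m, ((n + 2 * m) % 5 = 0 ∨ (n + 2 * m) % 5 = 3) ∧ 8 * m ≤ n + 1 ∧
      4 * n / 5 ≤ n - (m + (n + 4 - 8 * m) / 5) := by
    obtain h | h | h | h | h : n % 5 = 0 ∨ n % 5 = 1 ∨ n % 5 = 2 ∨ n % 5 = 3 ∨ n % 5 = 4 := by omega
    exacts [⟨0, by omega⟩, ⟨1, by omega⟩, ⟨3, by omega⟩, ⟨0, by omega⟩, ⟨2, by omega⟩]
  exact hsize.trans (le_alpha_four m h5 (by omega) h8)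

theorem bhm_of_even_of_six_le (hk : Even k) (h6 : 6 ≤ k) (hn : 3 * k < n) :
    4 * n / 5 ≤ alpha n k := by
  have : NeZero n := ⟨by omega⟩
  by_cases hexc : k = 6 ∧ (n = 19 ∨ n = 20 ∨ n = 22 ∨ n = 24 ∨ n = 29) ∨
      k = 8 ∧ (n = 25 ∨ n = 28 ∨ n = 30) ∨ k = 10 ∧ n = 34 ∨ k = 12 ∧ n = 40
  · obtain ⟨rfl, rfl | rfl | rfl | rfl | rfl⟩ | ⟨rfl, rfl | rfl | rfl⟩ | ⟨rfl, rfl⟩ | ⟨rfl, rfl⟩ :=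
      hexc
    · exact bhm_of_finsets {2, 4, 8, 10, 13, 16, 18} {0, 3, 5, 7, 12, 14, 15, 17} (by decide)
    · exact bhm_of_finsets {1, 4, 6, 8, 11, 13, 15, 17, 19} {0, 2, 3, 5, 7, 10, 18} (by decide)
    · exact bhm_of_finsets {0, 2, 5, 7, 10, 12, 18, 20} {1, 4, 6, 8, 9, 11, 13, 16, 21}
        (by decide)
    · exact bhm_of_finsets {0, 2, 4, 9, 12, 14, 19, 21} {1, 3, 6, 8, 10, 11, 13, 15, 18, 22, 23}
        (by decide)
    · exact bhm_of_finsets {0, 3, 5, 7, 11, 13, 15, 18, 20, 23, 25, 27}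
        {2, 6, 9, 14, 16, 17, 19, 21, 24, 26, 28} (by decide)
    · exact bhm_of_finsets {0, 3, 5, 7, 9, 12, 14, 19, 23} {1, 2, 4, 6, 11, 13, 15, 16, 17, 20, 22}
        (by decide)
    · exact bhm_of_finsets {2, 4, 8, 11, 14, 16, 18, 23, 25, 27}
        {0, 1, 3, 5, 10, 12, 15, 17, 19, 22, 24, 26} (by decide)
    · exact bhm_of_finsets {0, 2, 5, 7, 9, 11, 13, 16, 18, 23, 25, 27}
        {1, 3, 8, 10, 14, 15, 17, 19, 21, 24, 26, 28} (by decide)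
    · exact bhm_of_finsets {1, 3, 5, 8, 10, 12, 14, 16, 19, 21, 23, 26, 28, 31, 33}
        {0, 2, 7, 9, 11, 13, 15, 18, 20, 22, 27, 29} (by decide)
    · exact bhm_of_finsets {2, 4, 7, 10, 12, 14, 23, 25, 28, 31, 33, 36, 39}
        {0, 3, 5, 6, 8, 11, 13, 16, 19, 21, 22, 24, 26, 27, 29, 30, 32, 35, 37} (by decide)
  · exact (four_mul_div_five_le_evenPatternSize hk h6 hn hexc).trans
      (evenPatternSize_le_alpha hk (by omega))

end Constructions

/-- For all `k ≥ 1` and `n > 3k`, `α(P(n,k)) ≥ ⌊4n/5⌋`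
(Behsaz–Hatami–Mahmoodian's conjecture holds whenever `n > 3k`). -/
theorem bhm_conjecture_n_gt_3k (n k : ℕ) (hk : 1 ≤ k) (hn : 3 * k < n) :
    4 * n / 5 ≤ alpha n k := by
  rcases Nat.even_or_odd k with he | ho
  · obtain rfl | rfl | h6 : k = 2 ∨ k = 4 ∨ 6 ≤ k := by rcases he with ⟨j, rfl⟩; omega
    · exact (by omega : 4 * n / 5 ≤ n - (n + 4) / 5).trans (le_alpha_two (by omega))
    · exact bhm_four hn
    · exact bhm_of_even_of_six_le he h6 hn
  · exact bhm_of_odd ho hn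

end GP
end
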